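/- (Theorem 2) Let D ≥ 1, n ≥ 2, fix a diagonal matrix H^diag ∈ ℝ^{D×D} and ỹ ∈ ℝ^D, and let X ∈ ℝ^{D×n} have all rows non-constant. Define Loss^diag(X) = (1/2)Σ_{i=1}^n (y^{(i)} − ỹ)ᵀ H^diag (y^{(i)} − ỹ), where y^{(i)} is the i-th column of the row-wise standardization Y(X). Then the Fréchet derivative of Loss^diag with respect to X vanishes at X: ∂Loss^diag/∂X = 0. In particular, the diagonal elements of the Hessian of the loss at the expansion point ỹ cannot pass their influence through the batch-normalization standardization phase. -/

import Mathlib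

open scoped BigOperators

/-- Mini-batch mean of a feature dimension across `n` samples. -/
noncomputable def bmean {n : ℕ} (x : Fin n → ℝ) : ℝ := (∑ i, x i) / n

/-- Mini-batch standard deviation of a feature dimension across `n` samples. -/
noncomputable def bstd {n : ℕ} (x : Fin n → ℝ) : ℝ :=
  Real.sqrt ((∑ i, (x i - bmean x) ^ 2) / n)

/-- `x` is non-constant: it differs from the constant vector of its mean. -/
def NonConstant {n : ℕ} (x : Fin n → ℝ) : Prop := x ≠ fun _ => bmean x

/-- The batch-normalization standardization phase (with ε = 0). -/
noncomputable def standardize {n : ℕ} (x : Fin n → ℝ) : Fin n → ℝ :=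
  fun i => (x i - bmean x) / bstd x

/-! Standardization forces every row of `Y(X)` to have mean `0` and mean square `1`. A diagonal
`H` only sees the row sums `∑ᵢ (y_d⁽ⁱ⁾ − ỹ_d)² = n (1 + ỹ_d²)`, so `Loss^diag` is constant on the
open set of matrices with non-constant rows, and its derivative vanishes there. -/

open Finset

theorem NonConstant.pos {n : ℕ} {x : Fin n → ℝ} (hx : NonConstant x) : 0 < n :=
  Nat.pos_of_ne_zero fun hn => by subst hn; exact hx (Subsingleton.elim _ _)

theorem nonConstant_iff_sum_sq_pos {n : ℕ} (x : Fin n → ℝ) :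
    NonConstant x ↔ 0 < ∑ i, (x i - bmean x) ^ 2 := by
  have hnonneg : 0 ≤ ∑ i, (x i - bmean x) ^ 2 := sum_nonneg fun i _ => sq_nonneg _
  constructor
  · intro hx
    refine hnonneg.lt_of_ne fun hzero => hx (funext fun i => ?_)
    have hi := (sum_eq_zero_iff_of_nonneg fun i _ => sq_nonneg (x i - bmean x)).mp
      hzero.symm i (mem_univ i)
    exact sub_eq_zero.mp (pow_eq_zero_iff two_ne_zero |>.mp hi)
  · intro hpos hx
    have hdev : ∀ i, x i - bmean x = 0 := fun i => sub_eq_zero.mpr (congrFun hx i)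
    simp [hdev] at hpos

theorem isOpen_setOf_nonConstant (n : ℕ) : IsOpen {x : Fin n → ℝ | NonConstant x} := by
  simp only [nonConstant_iff_sum_sq_pos]
  exact isOpen_lt continuous_const (by unfold bmean; fun_prop)

theorem sum_sub_bmean {n : ℕ} (x : Fin n → ℝ) : ∑ i, (x i - bmean x) = 0 := by
  rcases Nat.eq_zero_or_pos n with rfl | hn
  · simp
  · rw [sum_sub_distrib, sum_const, card_univ, Fintype.card_fin, nsmul_eq_mul, bmean,
      mul_div_cancel₀ _ (by positivity), sub_self]

theorem sum_standardize {n : ℕ} (x : Fin n → ℝ) : ∑ i, standardize x i = 0 := by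
  simp only [standardize]
  rw [← sum_div, sum_sub_bmean, zero_div]

theorem sum_standardize_sq {n : ℕ} {x : Fin n → ℝ} (hx : NonConstant x) :
    ∑ i, standardize x i ^ 2 = n := by
  have hS := (nonConstant_iff_sum_sq_pos x).mp hx
  have hn : (0 : ℝ) < n := Nat.cast_pos.mpr hx.pos
  have hstd_sq : bstd x ^ 2 = (∑ i, (x i - bmean x) ^ 2) / n :=
    Real.sq_sqrt (div_nonneg hS.le hn.le)
  simp only [standardize, div_pow]
  rw [← sum_div, hstd_sq]
  field_simp

theorem sum_standardize_sub_sq {n : ℕ} {x : Fin n → ℝ} (hx : NonConstant x) (c : ℝ) :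
    ∑ i, (standardize x i - c) ^ 2 = n * (1 + c ^ 2) := by
  have hexpand : ∀ i, (standardize x i - c) ^ 2 = standardize x i ^ 2 - 2 * c * standardize x i
      + c ^ 2 := fun i => by ring
  simp only [hexpand, sum_add_distrib, sum_sub_distrib, ← mul_sum, sum_standardize_sq hx,
    sum_standardize, sum_const, card_univ, Fintype.card_fin, nsmul_eq_mul]
  ring

theorem Matrix.IsDiag.sum_mul_mul {ι α : Type*} [Fintype ι] [CommSemiring α] {H : Matrix ι ι α}
    (hH : H.IsDiag) (u v : ι → α) : ∑ j, ∑ k, u j * H j k * v k = ∑ j, H j j * (u j * v j) := by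
  refine sum_congr rfl fun j _ => ?_
  rw [sum_eq_single j (fun k _ hkj => by rw [hH hkj.symm, mul_zero, zero_mul])
    (fun hj => absurd (mem_univ j) hj)]
  ring

theorem loss_diag_eq_of_nonConstant {D n : ℕ} {H : Matrix (Fin D) (Fin D) ℝ} (hH : H.IsDiag)
    (ytil : Fin D → ℝ) {Z : Fin D → Fin n → ℝ} (hZ : ∀ d, NonConstant (Z d)) :
    (1 / 2 : ℝ) * ∑ i, ∑ j, ∑ k,
        (standardize (Z j) i - ytil j) * H j k * (standardize (Z k) i - ytil k)
      = (1 / 2 : ℝ) * ∑ j, H j j * (n * (1 + ytil j ^ 2)) := by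
  simp only [hH.sum_mul_mul]
  rw [sum_comm]
  simp only [← mul_sum, ← sq, sum_standardize_sub_sq (hZ _)]

theorem loss_diag_fderiv_zero_general (D n : ℕ)
    (Hdiag : Matrix (Fin D) (Fin D) ℝ) (hHdiag : Hdiag.IsDiag)
    (ytil : Fin D → ℝ) (X : Fin D → Fin n → ℝ) (hX : ∀ d, NonConstant (X d)) :
    HasFDerivAt
      (fun Z : Fin D → Fin n → ℝ =>
        (1 / 2 : ℝ) * ∑ i, ∑ j, ∑ k,
          (standardize (Z j) i - ytil j) * Hdiag j k * (standardize (Z k) i - ytil k))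
      (0 : (Fin D → Fin n → ℝ) →L[ℝ] ℝ) X := by
  have hrows_open : IsOpen (Set.univ.pi fun _ : Fin D => {x : Fin n → ℝ | NonConstant x}) :=
    isOpen_set_pi Set.finite_univ fun _ _ => isOpen_setOf_nonConstant n
  refine (hasFDerivAt_const ((1 / 2 : ℝ) * ∑ j, Hdiag j j * (n * (1 + ytil j ^ 2))) X)
    |>.congr_of_eventuallyEq ?_
  filter_upwards [hrows_open.mem_nhds (Set.mem_univ_pi.mpr hX)] with Z hZ
  exact loss_diag_eq_of_nonConstant hHdiag ytil (Set.mem_univ_pi.mp hZ)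

/-- Theorem 2: the diagonal second-order Taylor loss term
`Loss^diag(X) = (1/2) Σᵢ (y⁽ⁱ⁾ − ỹ)ᵀ H^diag (y⁽ⁱ⁾ − ỹ)` has vanishing Fréchet derivative
with respect to `X`, for any diagonal matrix `H^diag`. -/
theorem loss_diag_fderiv_zero (D n : ℕ) (hD : 1 ≤ D) (hn : 2 ≤ n)
    (Hdiag : Matrix (Fin D) (Fin D) ℝ) (hHdiag : Hdiag.IsDiag)
    (ytil : Fin D → ℝ) (X : Fin D → Fin n → ℝ) (hX : ∀ d, NonConstant (X d)) :
    HasFDerivAt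
      (fun Z : Fin D → Fin n → ℝ =>
        (1 / 2 : ℝ) * ∑ i, ∑ j, ∑ k,
          (standardize (Z j) i - ytil j) * Hdiag j k * (standardize (Z k) i - ytil k))
      (0 : (Fin D → Fin n → ℝ) →L[ℝ] ℝ) X :=
  loss_diag_fderiv_zero_general D n Hdiag hHdiag ytil X hX
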